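/- arXiv:1601.04445 — 2 statements merged into one kernel-verified Lean document; each statement's English description precedes it below -/
import Mathlib

section
/- Let (a_k)_{k≥0}, (α_k)_{k≥1} be nonnegative reals with sup_k α_k ≤ q < 1, and suppose there is A ≥ 0 such that for every N ≥ 1: a_N ≤ A + Σ_{k=1}^{N} α_k·a_k. Then for every N ≥ 1: a_N ≤ (A/(1−q))·exp( (1/(1−q))·Σ_{k=1}^{N−1} α_k ). -/
/-!
Moving the last term `α_{N+1} a_{N+1}` of the sum to the left and dividing by `1 - q` gives
`a_{N+1} ≤ S_N := A/(1-q) + Σ_{k=1}^{N} (α_k/(1-q)) a_k`. Then `S_{N+1} ≤ S_N (1 + α_{N+1}/(1-q))`,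
hence `S_N ≤ A/(1-q) ∏ (1 + α_k/(1-q))`, and `1 + x ≤ exp x` turns the product into the exponential.
-/

namespace AGS

open Finset

lemma le_div_one_sub_of_le_add_mul {x b β q : ℝ} (hx : 0 ≤ x) (hβ : β ≤ q) (hq : q < 1)
    (h : x ≤ b + β * x) : x ≤ b / (1 - q) := by
  rw [le_div_iff₀ (by linarith)]
  nlinarith

lemma add_sum_mul_le_mul_prod_one_add {u β : ℕ → ℝ} {B : ℝ} (hβ : ∀ k, 0 ≤ β k)
    (hu : ∀ n, u (n + 1) ≤ B + ∑ k ∈ Icc 1 n, β k * u k) (n : ℕ) :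
    B + ∑ k ∈ Icc 1 n, β k * u k ≤ B * ∏ k ∈ Icc 1 n, (1 + β k) := by
  induction n with
  | zero => simp
  | succ n ih =>
    rw [sum_Icc_succ_top (by omega), prod_Icc_succ_top (by omega)]
    calc B + (∑ k ∈ Icc 1 n, β k * u k + β (n + 1) * u (n + 1))
        ≤ (B + ∑ k ∈ Icc 1 n, β k * u k) * (1 + β (n + 1)) := by
          nlinarith [mul_le_mul_of_nonneg_left (hu n) (hβ (n + 1))]
      _ ≤ B * ((∏ k ∈ Icc 1 n, (1 + β k)) * (1 + β (n + 1))) := by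
          rw [← mul_assoc]
          exact mul_le_mul_of_nonneg_right ih (by linarith [hβ (n + 1)])

lemma le_mul_exp_sum_of_le_add_sum {u β : ℕ → ℝ} {B : ℝ} (hβ : ∀ k, 0 ≤ β k) (hB : 0 ≤ B)
    (hu : ∀ n, u (n + 1) ≤ B + ∑ k ∈ Icc 1 n, β k * u k) (n : ℕ) :
    u (n + 1) ≤ B * Real.exp (∑ k ∈ Icc 1 n, β k) :=
  calc u (n + 1) ≤ B + ∑ k ∈ Icc 1 n, β k * u k := hu n
    _ ≤ B * ∏ k ∈ Icc 1 n, (1 + β k) := add_sum_mul_le_mul_prod_one_add hβ hu n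
    _ ≤ B * Real.exp (∑ k ∈ Icc 1 n, β k) :=
      mul_le_mul_of_nonneg_left (Real.prod_one_add_le_exp_sum _ hβ) hB

theorem discrete_gronwall (a : ℕ → ℝ) (α : ℕ → ℝ) (q A : ℝ)
    (ha : ∀ k, 0 ≤ a k) (hα : ∀ k, 0 ≤ α k)
    (hq : ∀ k, 1 ≤ k → α k ≤ q) (hq1 : q < 1) (hA : 0 ≤ A)
    (hrec : ∀ N : ℕ, 1 ≤ N → a N ≤ A + ∑ k ∈ Finset.Icc 1 N, α k * a k) :
    ∀ N : ℕ, 1 ≤ N →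
      a N ≤ (A / (1 - q)) * Real.exp ((1 / (1 - q)) * ∑ k ∈ Finset.Icc 1 (N - 1), α k) := by
  have h1q : 0 < 1 - q := by linarith
  have hstep : ∀ n, a (n + 1) ≤ A / (1 - q) + ∑ k ∈ Icc 1 n, α k / (1 - q) * a k := by
    intro n
    have h := hrec (n + 1) (by omega)
    rw [sum_Icc_succ_top (by omega), ← add_assoc] at h
    calc a (n + 1) ≤ (A + ∑ k ∈ Icc 1 n, α k * a k) / (1 - q) :=
          le_div_one_sub_of_le_add_mul (ha _) (hq _ (by omega)) hq1 h
      _ = A / (1 - q) + ∑ k ∈ Icc 1 n, α k / (1 - q) * a k := by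
          rw [add_div, sum_div]
          simp only [div_mul_eq_mul_div]
  intro N hN
  obtain ⟨n, rfl⟩ : ∃ n, N = n + 1 := ⟨N - 1, by omega⟩
  have h := le_mul_exp_sum_of_le_add_sum (fun k => div_nonneg (hα k) h1q.le)
    (div_nonneg hA h1q.le) hstep n
  rwa [Nat.add_sub_cancel, one_div_mul_eq_div, sum_div]
end AGS
end

section
/- Let f : [0,∞) → ℝ be 1-periodic, bounded and measurable with ∫_0^1 f(s) ds = 0, and let λ ≤ 0. Then for all t > 0 and ω > 0: | ∫_0^t e^{2λr} f(ωr) dr | ≤ (C/ω)·(1 + |λ|t), where C depends only on sup|f|. -/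
open MeasureTheory intervalIntegral
open scoped Interval

/-!
Since `f` has mean zero, its primitive is `1`-periodic, hence bounded by `M`, and the primitive of
`r ↦ f (ω r)` is bounded by `M / ω`. Integrating by parts moves the derivative onto the weight
`e^{2λr}`, which is at most `1` with derivative at most `2|λ|` on `[0, t]`; so `C = 2M` works.
-/

theorem MeasureTheory.AEStronglyMeasurable.intervalIntegrable_of_norm_le
    {E : Type*} [NormedAddCommGroup E] {f : ℝ → E} {M a b : ℝ}
    (hf : AEStronglyMeasurable f volume) (hbdd : ∀ x, ‖f x‖ ≤ M) :
    IntervalIntegrable f volume a b :=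
  intervalIntegrable_const.mono_fun' hf.restrict (Filter.Eventually.of_forall hbdd)

namespace Function.Periodic

variable {E : Type*} [NormedAddCommGroup E] [NormedSpace ℝ E] {f : ℝ → E} {T M : ℝ}

theorem periodic_integral_of_integral_eq_zero (hf : Periodic f T) (hT : 0 < T)
    (hint : IntervalIntegrable f volume 0 T) (hmean : ∫ x in 0..T, f x = 0) :
    Periodic (fun x => ∫ y in 0..x, f y) T := fun x => by
  have hint' := hf.intervalIntegrable hT.ne' (t := 0) (by rwa [zero_add])
  dsimp only
  rw [← integral_add_adjacent_intervals (hint' 0 x) (hint' x (x + T)),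
    hf.intervalIntegral_add_eq x 0, zero_add, hmean, add_zero]

theorem norm_integral_le_of_integral_eq_zero (hf : Periodic f T) (hT : 0 < T)
    (hint : IntervalIntegrable f volume 0 T) (hbdd : ∀ x, ‖f x‖ ≤ M)
    (hmean : ∫ x in 0..T, f x = 0) (x : ℝ) :
    ‖∫ y in 0..x, f y‖ ≤ M * T := by
  obtain ⟨y, ⟨hy₀, hyT⟩, hxy⟩ :=
    (hf.periodic_integral_of_integral_eq_zero hT hint hmean).exists_mem_Ico₀ hT x
  rw [hxy]
  calc ‖∫ z in 0..y, f z‖ ≤ M * |y - 0| :=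
        norm_integral_le_of_norm_le_const fun z _ => hbdd z
    _ ≤ M * T := by
      rw [sub_zero, abs_of_nonneg hy₀]
      exact mul_le_mul_of_nonneg_left hyT.le ((norm_nonneg _).trans (hbdd 0))

theorem norm_integral_comp_mul_le_of_integral_eq_zero (hf : Periodic f T) (hT : 0 < T)
    (hint : IntervalIntegrable f volume 0 T) (hbdd : ∀ x, ‖f x‖ ≤ M)
    (hmean : ∫ x in 0..T, f x = 0) {ω : ℝ} (hω : 0 < ω) (x : ℝ) :
    ‖∫ r in 0..x, f (ω * r)‖ ≤ M * T / ω := by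
  rw [integral_comp_mul_left f hω.ne', mul_zero, norm_smul, norm_inv, Real.norm_of_nonneg hω.le,
    inv_mul_eq_div]
  exact div_le_div_of_nonneg_right (hf.norm_integral_le_of_integral_eq_zero hT hint hbdd hmean _)
    hω.le

end Function.Periodic

namespace AbsolutelyContinuousOnInterval

variable {u g : ℝ → ℝ} {a b : ℝ}

theorem integral_mul_eq_sub_integral_deriv_mul_primitive
    (hu : AbsolutelyContinuousOnInterval u a b) (hg : IntervalIntegrable g volume a b) :
    ∫ x in a..b, u x * g x =
      u b * (∫ x in a..b, g x) - ∫ x in a..b, deriv u x * ∫ y in a..x, g y := by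
  have hG := hg.absolutelyContinuousOnInterval_intervalIntegral Set.left_mem_uIcc
  have hG' : ∀ᵐ x, x ∈ Ι a b →
      u x * g x = u x * deriv (fun x => ∫ y in a..x, g y) x := by
    filter_upwards [hg.ae_hasDerivAt_integral] with x hx hxab
    rw [(hx (Set.uIoc_subset_uIcc hxab) a Set.left_mem_uIcc).deriv]
  rw [integral_congr_ae hG', hu.integral_mul_deriv_eq_deriv_mul hG, integral_same, mul_zero,
    sub_zero]

theorem abs_integral_mul_le_of_abs_primitive_le {K L L' : ℝ}
    (hu : AbsolutelyContinuousOnInterval u a b) (hg : IntervalIntegrable g volume a b)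
    (hG : ∀ x, |∫ y in a..x, g y| ≤ K) (hub : |u b| ≤ L)
    (hu' : ∀ x ∈ Ι a b, |deriv u x| ≤ L') :
    |∫ x in a..b, u x * g x| ≤ (L + L' * |b - a|) * K := by
  have hK : 0 ≤ K := (abs_nonneg _).trans (hG a)
  have hL' : ∀ x ∈ Ι a b, ‖deriv u x * ∫ y in a..x, g y‖ ≤ L' * K := fun x hx => by
    rw [Real.norm_eq_abs, abs_mul]
    exact mul_le_mul (hu' x hx) (hG x) (abs_nonneg _) ((abs_nonneg _).trans (hu' x hx))
  rw [hu.integral_mul_eq_sub_integral_deriv_mul_primitive hg]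
  calc _ ≤ |u b * ∫ x in a..b, g x| + |∫ x in a..b, deriv u x * ∫ y in a..x, g y| :=
        abs_sub _ _
    _ ≤ L * K + L' * K * |b - a| := by
      rw [abs_mul]
      gcongr
      · exact (abs_nonneg _).trans hub
      · exact hG b
      · exact norm_integral_le_of_norm_le_const hL'
    _ = (L + L' * |b - a|) * K := by ring

end AbsolutelyContinuousOnInterval

theorem averaging_estimate_oscillating (f : ℝ → ℝ) (M : ℝ)
    (hmeas : Measurable f)
    (hper : ∀ s : ℝ, f (s + 1) = f s)
    (hbdd : ∀ s : ℝ, |f s| ≤ M)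
    (hmean : (∫ s in (0 : ℝ)..1, f s) = 0) :
    ∃ C : ℝ, 0 ≤ C ∧ ∀ lam : ℝ, lam ≤ 0 → ∀ t ω : ℝ, 0 < t → 0 < ω →
      |∫ r in (0 : ℝ)..t, Real.exp (2 * lam * r) * f (ω * r)| ≤
        C / ω * (1 + |lam| * t) := by
  have hM : 0 ≤ M := (abs_nonneg _).trans (hbdd 0)
  have hperiodic : Function.Periodic f 1 := hper
  refine ⟨2 * M, by positivity, fun lam hlam t ω ht hω => ?_⟩
  have hprim (x : ℝ) : |∫ r in 0..x, f (ω * r)| ≤ M / ω := by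
    simpa using hperiodic.norm_integral_comp_mul_le_of_integral_eq_zero
      one_pos (hmeas.aestronglyMeasurable.intervalIntegrable_of_norm_le hbdd) hbdd hmean hω x
  have hdecay {x : ℝ} (hx : 0 ≤ x) : |Real.exp (2 * lam * x)| ≤ 1 := by
    rw [abs_of_pos (Real.exp_pos _), Real.exp_le_one_iff]
    exact mul_nonpos_of_nonpos_of_nonneg (by linarith) hx
  have hweight : ∀ x ∈ Ι 0 t, |deriv (fun r => Real.exp (2 * lam * r)) x| ≤ 2 * |lam| := by
    intro x hx
    rw [Set.uIoc_of_le ht.le] at hx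
    have hd : HasDerivAt (fun r => Real.exp (2 * lam * r))
        (Real.exp (2 * lam * x) * (2 * lam)) x := by
      simpa using ((hasDerivAt_id x).const_mul (2 * lam)).exp
    rw [hd.deriv, abs_mul, abs_mul, abs_two]
    exact mul_le_of_le_one_left (by positivity) (hdecay hx.1.le)
  have hac : AbsolutelyContinuousOnInterval (fun r => Real.exp (2 * lam * r)) 0 t :=
    (by fun_prop : ContDiff ℝ 1 fun r => Real.exp (2 * lam * r)).contDiffOn
      |>.absolutelyContinuousOnInterval
  have hint : IntervalIntegrable (fun r => f (ω * r)) volume 0 t :=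
    (hmeas.comp (measurable_const_mul ω)).aestronglyMeasurable.intervalIntegrable_of_norm_le
      fun r => hbdd (ω * r)
  calc _ ≤ (1 + 2 * |lam| * |t - 0|) * (M / ω) :=
        hac.abs_integral_mul_le_of_abs_primitive_le hint hprim (hdecay ht.le) hweight
    _ ≤ 2 * M / ω * (1 + |lam| * t) := by
      rw [sub_zero, abs_of_pos ht, mul_div_assoc]
      nlinarith [div_nonneg hM hω.le, abs_nonneg lam]
end
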